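/- For all integers m, n ≥ 0 and all real numbers x, y, writing z = x + i y, one has H_m(x) H_n(y) = (i^n / 2^{m+n}) Σ_{j=0}^{m+n} ( Σ_{r+s=j, 0≤r≤m, 0≤s≤n} C(m,r) C(n,s) (−1)^s ) J_{j, m+n−j}(z), where H_n is the probabilist's Hermite polynomial and both sides are regarded as complex numbers. -/

import Mathlib

open scoped ComplexConjugate

/-- The complex Hermite (Hermite–Laguerre–Itô) polynomial
`J_{p,q}(z) = Σ_{r=0}^{min(p,q)} (−2)^r r! C(p,r) C(q,r) z^{p−r} (conj z)^{q−r}`. -/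
noncomputable def complexHermite (p q : ℕ) (z : ℂ) : ℂ :=
  ∑ r ∈ Finset.range (min p q + 1),
    (-2 : ℂ) ^ r * (r.factorial : ℂ) * (p.choose r : ℂ) * (q.choose r : ℂ) *
      z ^ (p - r) * (conj z) ^ (q - r)

/-- The probabilist's Hermite polynomial `H_n` evaluated at `x : ℝ`. -/
noncomputable def hermiteEval (n : ℕ) (x : ℝ) : ℝ :=
  Polynomial.aeval x (Polynomial.hermite n)

/-!
Write `z = x + iy`, so that `z + z̄ = 2x` and `z̄ - z = -2iy`. The polynomial `J_{p,q}(z)` is the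
image of `Z^p Z̄^q` under a linear "umbral" map `U`, and the recurrences
`z J_{p,q} = J_{p+1,q} + 2q J_{p,q-1}`, `z̄ J_{p,q} = J_{p,q+1} + 2p J_{p-1,q}` say that
`U(Z P) = z U(P) - 2 U(∂P/∂Z̄)` and `U(Z̄ P) = z̄ U(P) - 2 U(∂P/∂Z)`. The right-hand side of the
theorem is `i^n / 2^(m+n)` times `T_{m,n} = U((Z + Z̄)^m (Z̄ - Z)^n)`, and the two rules give
`T_{m+1,n} = 2x T_{m,n} - 4m T_{m-1,n}` and `T_{m,n+1} = -2iy T_{m,n} + 4n T_{m,n-1}`. So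
`i^n T_{m,n}` obeys, in each index, the recurrence that `H_{k+1} = x H_k - k H_{k-1}` gives for
`2^m H_m(x) 2^n H_n(y)`, and both are `1` at `m = n = 0`.
-/

open Finset Polynomial

theorem Polynomial.derivative_hermite_succ (n : ℕ) :
    derivative (hermite (n + 1)) = ((n : ℤ[X]) + 1) * hermite n := by
  induction n with
  | zero => simp
  | succ n ih =>
    rw [hermite_succ (n + 1), derivative_sub, derivative_mul, derivative_X, ih,
      derivative_mul, derivative_add, derivative_natCast, derivative_one]
    push_cast
    linear_combination -((n : ℤ[X]) + 1) * hermite_succ n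

theorem Polynomial.hermite_succ_succ (n : ℕ) :
    hermite (n + 2) = X * hermite (n + 1) - ((n : ℤ[X]) + 1) * hermite n := by
  rw [hermite_succ (n + 1), derivative_hermite_succ]

theorem Polynomial.coeff_X_mul_derivative {R : Type*} [Semiring R] (p : R[X]) (n : ℕ) :
    (X * derivative p).coeff n = n * p.coeff n := by
  cases n with
  | zero => simp
  | succ n => rw [coeff_X_mul, coeff_derivative, ← Nat.cast_succ, Nat.cast_comm]

theorem Polynomial.coeff_one_sub_X_pow {R : Type*} [Ring R] (n k : ℕ) :
    ((1 - X : R[X]) ^ n).coeff k = (-1) ^ k * n.choose k := by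
  induction n generalizing k with
  | zero => cases k <;> simp [coeff_one]
  | succ n ih =>
    cases k with
    | zero => simp [pow_succ, ih]
    | succ k =>
      rw [pow_succ, mul_sub, mul_one, coeff_sub, ← X_mul, coeff_X_mul, ih, ih,
        Nat.choose_succ_succ']
      push_cast
      noncomm_ring

theorem natDegree_one_add_X_pow_mul_one_sub_X_pow_le {R : Type*} [Ring R] (m n : ℕ) :
    ((1 + X) ^ m * (1 - X) ^ n : R[X]).natDegree ≤ m + n := by
  compute_degree

theorem eq_of_recurrence {α : Type*} {u v : ℕ → α} (f : ℕ → α → α → α)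
    (hu : ∀ k, u (k + 1) = f k (u k) (u (k - 1))) (hv : ∀ k, v (k + 1) = f k (v k) (v (k - 1)))
    (h0 : u 0 = v 0) : u = v := by
  suffices h : ∀ k, u k = v k ∧ u (k + 1) = v (k + 1) from funext fun k ↦ (h k).1
  intro k
  induction k with
  | zero => exact ⟨h0, by rw [hu, hv, Nat.zero_sub, h0]⟩
  | succ k ih => exact ⟨ih.2, by rw [hu, hv, Nat.add_sub_cancel, ih.1, ih.2]⟩

theorem two_pow_mul_hermiteEval_succ (n : ℕ) (x : ℝ) :
    2 ^ (n + 1) * hermiteEval (n + 1) x =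
      2 * x * (2 ^ n * hermiteEval n x) - 4 * n * (2 ^ (n - 1) * hermiteEval (n - 1) x) := by
  cases n with
  | zero => simp [hermiteEval]
  | succ n =>
    simp only [hermiteEval, hermite_succ_succ, map_sub, map_mul, map_add, map_natCast, map_one,
      aeval_X, Nat.add_sub_cancel]
    push_cast
    ring

noncomputable def complexHermiteTerm (p q : ℕ) (z : ℂ) (r : ℕ) : ℂ :=
  (-2 : ℂ) ^ r * (r.factorial : ℂ) * (p.choose r : ℂ) * (q.choose r : ℂ) *
    z ^ (p - r) * (conj z) ^ (q - r)

theorem complexHermiteTerm_eq_zero {p q r : ℕ} (h : min p q < r) (z : ℂ) :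
    complexHermiteTerm p q z r = 0 := by
  rcases min_lt_iff.mp h with h | h <;> simp [complexHermiteTerm, Nat.choose_eq_zero_of_lt h]

theorem complexHermite_eq_sum_range {p q K : ℕ} (h : min p q ≤ K) (z : ℂ) :
    complexHermite p q z = ∑ r ∈ range (K + 1), complexHermiteTerm p q z r :=
  sum_subset (by gcongr) fun r _ hr ↦
    complexHermiteTerm_eq_zero (by rw [mem_range, not_lt] at hr; omega) z

theorem complexHermiteTerm_succ_succ (p q r : ℕ) (z : ℂ) :
    complexHermiteTerm (p + 1) q z (r + 1) =
      z * complexHermiteTerm p q z (r + 1) - 2 * q * complexHermiteTerm p (q - 1) z r := by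
  have hq : (q.choose (r + 1) : ℂ) * (r + 1) = q * ((q - 1).choose r) := by
    cases q with
    | zero => simp
    | succ q => exact_mod_cast (Nat.add_one_mul_choose_eq q r).symm
  unfold complexHermiteTerm
  rw [Nat.choose_succ_succ', Nat.factorial_succ, Nat.add_sub_add_right,
    show q - 1 - r = q - (r + 1) by omega]
  rcases lt_or_ge r p with h | h
  · rw [show p - r = p - (r + 1) + 1 by omega]
    push_cast
    linear_combination (-2 : ℂ) ^ (r + 1) * r.factorial * p.choose r * z ^ (p - (r + 1) + 1) *
      conj z ^ (q - (r + 1)) * hq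
  · rw [Nat.choose_eq_zero_of_lt (by omega : p < r + 1)]
    push_cast
    linear_combination (-2 : ℂ) ^ (r + 1) * r.factorial * p.choose r * z ^ (p - r) *
      conj z ^ (q - (r + 1)) * hq

theorem mul_complexHermite (p q : ℕ) (z : ℂ) :
    z * complexHermite p q z = complexHermite (p + 1) q z + 2 * q * complexHermite p (q - 1) z := by
  rw [complexHermite_eq_sum_range (K := p + 1) (by omega),
    complexHermite_eq_sum_range (p := p + 1) (K := p + 1) (by omega),
    complexHermite_eq_sum_range (K := p) (by omega)]
  simp only [sum_range_succ' _ (p + 1), complexHermiteTerm_succ_succ, sum_sub_distrib, mul_sum,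
    mul_add]
  simp [complexHermiteTerm, pow_succ]
  ring

theorem complexHermite_conj (p q : ℕ) (z : ℂ) :
    complexHermite p q (conj z) = complexHermite q p z := by
  unfold complexHermite
  rw [min_comm]
  refine sum_congr rfl fun r _ ↦ ?_
  rw [Complex.conj_conj]
  ring

theorem conj_mul_complexHermite (p q : ℕ) (z : ℂ) :
    conj z * complexHermite p q z =
      complexHermite p (q + 1) z + 2 * p * complexHermite (p - 1) q z := by
  simpa only [complexHermite_conj] using mul_complexHermite q p (conj z)

/-- A homogeneous polynomial `Σ_j p_j Z^j Z̄^(N-j)` of degree `N` is encoded by `p`; then `∂/∂Z` and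
`∂/∂Z̄` become `p ↦ p'` and `p ↦ N p - X p'`, and `complexHermiteSum N z` is the umbral map `U`. -/
noncomputable def complexHermiteSum (N : ℕ) (z : ℂ) : ℂ[X] →ₗ[ℂ] ℂ :=
  ∑ j ∈ range (N + 1), complexHermite j (N - j) z • lcoeff ℂ j

theorem complexHermiteSum_apply (N : ℕ) (z : ℂ) (p : ℂ[X]) :
    complexHermiteSum N z p = ∑ j ∈ range (N + 1), p.coeff j * complexHermite j (N - j) z := by
  simp [complexHermiteSum, mul_comm]

theorem complexHermiteSum_sub_one {N : ℕ} (z : ℂ) {p : ℂ[X]} (hp : p.coeff N = 0) :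
    complexHermiteSum (N - 1) z p =
      ∑ j ∈ range (N + 1), p.coeff j * complexHermite j (N - 1 - j) z := by
  cases N with
  | zero => simp [complexHermiteSum_apply]
  | succ N => simp [complexHermiteSum_apply, sum_range_succ _ (N + 1), hp]

theorem mul_complexHermiteSum (N : ℕ) (z : ℂ) (p : ℂ[X]) :
    z * complexHermiteSum N z p = complexHermiteSum (N + 1) z (X * p) +
      2 * complexHermiteSum (N - 1) z ((N : ℂ) • p - X * derivative p) := by
  have hX : complexHermiteSum (N + 1) z (X * p) =
      ∑ j ∈ range (N + 1), p.coeff j * complexHermite (j + 1) (N - j) z := by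
    simp [complexHermiteSum_apply, sum_range_succ' _ (N + 1), coeff_X_mul]
  rw [hX, complexHermiteSum_sub_one z (by simp [coeff_X_mul_derivative]),
    complexHermiteSum_apply, mul_sum, mul_sum,
    ← sum_add_distrib]
  refine sum_congr rfl fun j hj ↦ ?_
  have hjN : j ≤ N := Nat.lt_succ_iff.mp (mem_range.mp hj)
  rw [← mul_assoc, mul_comm z, mul_assoc, mul_complexHermite, Nat.cast_sub hjN,
    show N - j - 1 = N - 1 - j by omega]
  simp only [coeff_sub, coeff_smul, coeff_X_mul_derivative, smul_eq_mul]
  ring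

theorem conj_mul_complexHermiteSum {N : ℕ} (z : ℂ) {p : ℂ[X]} (hp : p.natDegree ≤ N) :
    conj z * complexHermiteSum N z p =
      complexHermiteSum (N + 1) z p + 2 * complexHermiteSum (N - 1) z (derivative p) := by
  have hN : p.coeff (N + 1) = 0 := coeff_eq_zero_of_natDegree_lt (by omega)
  have hp' : complexHermiteSum (N - 1) z (derivative p) =
      ∑ j ∈ range N, (j + 1) * p.coeff (j + 1) * complexHermite j (N - 1 - j) z := by
    rw [complexHermiteSum_sub_one z (by simp [coeff_derivative, hN]), sum_range_succ]
    simp [coeff_derivative, hN, mul_comm]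
  have hshift : ∑ j ∈ range (N + 1), (j : ℂ) * p.coeff j * complexHermite (j - 1) (N - j) z =
      ∑ j ∈ range N, (j + 1) * p.coeff (j + 1) * complexHermite j (N - 1 - j) z := by
    rw [sum_range_succ']
    simp [Nat.sub_sub, add_comm 1]
  rw [hp', ← hshift, complexHermiteSum_apply, complexHermiteSum_apply, sum_range_succ _ (N + 1),
    hN, zero_mul, add_zero, mul_sum, mul_sum, ← sum_add_distrib]
  refine sum_congr rfl fun j hj ↦ ?_
  rw [← mul_assoc, mul_comm (conj z), mul_assoc, conj_mul_complexHermite,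
    show N - j + 1 = N + 1 - j by have := mem_range.mp hj; omega]
  ring

noncomputable def binomialComplexHermiteSum (m n : ℕ) (z : ℂ) : ℂ :=
  complexHermiteSum (m + n) z ((1 + X) ^ m * (1 - X) ^ n)

theorem binomialComplexHermiteSum_succ_left (m n : ℕ) (z : ℂ) :
    binomialComplexHermiteSum (m + 1) n z =
      (z + conj z) * binomialComplexHermiteSum m n z -
        4 * m * binomialComplexHermiteSum (m - 1) n z := by
  set p : ℂ[X] := (1 + X) ^ m * (1 - X) ^ n
  have hderiv : ((m + n : ℕ) : ℂ) • p + (1 - X) * derivative p =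
      (2 * m : ℂ) • ((1 + X) ^ (m - 1) * (1 - X) ^ n) := by
    rcases m with _ | m <;> rcases n with _ | n <;>
      simp [p, derivative_pow, smul_eq_C_mul, map_ofNat] <;> ring
  have hlower : complexHermiteSum (m + n - 1) z (((m + n : ℕ) : ℂ) • p - X * derivative p) +
      complexHermiteSum (m + n - 1) z (derivative p) =
        2 * m * binomialComplexHermiteSum (m - 1) n z := by
    rw [← map_add, sub_add_eq_add_sub, add_sub_assoc, ← one_sub_mul, hderiv, map_smul,
      smul_eq_mul, binomialComplexHermiteSum]
    rcases m with _ | m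
    · simp
    · rw [show m + 1 + n - 1 = m + 1 - 1 + n by omega]
  have hsplit : binomialComplexHermiteSum (m + 1) n z =
      complexHermiteSum (m + n + 1) z (X * p) + complexHermiteSum (m + n + 1) z p := by
    rw [binomialComplexHermiteSum, ← map_add, add_right_comm, pow_succ', mul_assoc, ← add_one_mul,
      add_comm X]
  rw [hsplit, add_mul, binomialComplexHermiteSum, mul_complexHermiteSum,
    conj_mul_complexHermiteSum z (natDegree_one_add_X_pow_mul_one_sub_X_pow_le m n)]
  linear_combination -2 * hlower

theorem binomialComplexHermiteSum_succ_right (m n : ℕ) (z : ℂ) :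
    binomialComplexHermiteSum m (n + 1) z =
      (conj z - z) * binomialComplexHermiteSum m n z +
        4 * n * binomialComplexHermiteSum m (n - 1) z := by
  set p : ℂ[X] := (1 + X) ^ m * (1 - X) ^ n
  have hderiv : ((m + n : ℕ) : ℂ) • p - (1 + X) * derivative p =
      (2 * n : ℂ) • ((1 + X) ^ m * (1 - X) ^ (n - 1)) := by
    rcases m with _ | m <;> rcases n with _ | n <;>
      simp [p, derivative_pow, smul_eq_C_mul, map_ofNat] <;> ring
  have hlower : complexHermiteSum (m + n - 1) z (((m + n : ℕ) : ℂ) • p - X * derivative p) -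
      complexHermiteSum (m + n - 1) z (derivative p) =
        2 * n * binomialComplexHermiteSum m (n - 1) z := by
    rw [← map_sub, sub_sub, ← add_one_mul, add_comm X, hderiv, map_smul, smul_eq_mul,
      binomialComplexHermiteSum]
    rcases n with _ | n
    · simp
    · rw [show m + (n + 1) - 1 = m + (n + 1 - 1) by omega]
  have hsplit : binomialComplexHermiteSum m (n + 1) z =
      complexHermiteSum (m + n + 1) z p - complexHermiteSum (m + n + 1) z (X * p) := by
    rw [binomialComplexHermiteSum, ← map_sub, ← add_assoc, pow_succ', mul_left_comm, ← one_sub_mul]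
  rw [hsplit, sub_mul, binomialComplexHermiteSum, mul_complexHermiteSum,
    conj_mul_complexHermiteSum z (natDegree_one_add_X_pow_mul_one_sub_X_pow_le m n)]
  linear_combination 2 * hlower

theorem two_pow_mul_hermiteEval_mul_eq_binomialComplexHermiteSum (m n : ℕ) (x y : ℝ) :
    ((2 ^ m * hermiteEval m x : ℝ) : ℂ) * ((2 ^ n * hermiteEval n y : ℝ) : ℂ) =
      Complex.I ^ n * binomialComplexHermiteSum m n (x + y * Complex.I) := by
  set z : ℂ := x + y * Complex.I
  have hre : z + conj z = 2 * x := by simp [z, Complex.ext_iff]; ring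
  have him : conj z - z = -2 * y * Complex.I := by simp [z, Complex.ext_iff]; ring
  have hI (k : ℕ) : (k : ℂ) * Complex.I ^ (k + 1) = -(k * Complex.I ^ (k - 1)) := by
    rcases k with _ | k
    · simp
    · rw [Nat.add_sub_cancel, pow_succ, pow_succ, mul_assoc, Complex.I_mul_I]
      ring
  have hrec (t : ℝ) (k : ℕ) : ((2 ^ (k + 1) * hermiteEval (k + 1) t : ℝ) : ℂ) =
      2 * t * ((2 ^ k * hermiteEval k t : ℝ) : ℂ) -
        4 * k * ((2 ^ (k - 1) * hermiteEval (k - 1) t : ℝ) : ℂ) := by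
    exact_mod_cast two_pow_mul_hermiteEval_succ k t
  have hcol : ∀ l, ((2 ^ 0 * hermiteEval 0 x : ℝ) : ℂ) * ((2 ^ l * hermiteEval l y : ℝ) : ℂ) =
      Complex.I ^ l * binomialComplexHermiteSum 0 l z :=
    congrFun <| eq_of_recurrence (fun k s t ↦ 2 * y * s - 4 * k * t)
      (fun k ↦ by simp only [hrec y k]; ring)
      (fun k ↦ by
        simp only [binomialComplexHermiteSum_succ_right, him]
        linear_combination 4 * binomialComplexHermiteSum 0 (k - 1) z * hI k -
          2 * y * Complex.I ^ k * binomialComplexHermiteSum 0 k z * Complex.I_sq)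
      (by simp [hermiteEval, binomialComplexHermiteSum, complexHermiteSum_apply, complexHermite])
  refine congrFun (eq_of_recurrence
    (u := fun m ↦ ((2 ^ m * hermiteEval m x : ℝ) : ℂ) * ((2 ^ n * hermiteEval n y : ℝ) : ℂ))
    (v := fun m ↦ Complex.I ^ n * binomialComplexHermiteSum m n z)
    (fun k s t ↦ 2 * x * s - 4 * k * t) (fun k ↦ ?_) (fun k ↦ ?_) (hcol n)) m
  · simp only [hrec x k]; ring
  · simp only [binomialComplexHermiteSum_succ_left, hre]; ring

/-- **Expansion of products of real Hermite polynomials in complex Hermite polynomials.**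
For `m, n ≥ 0` and real `x, y`, with `z = x + i y`,
`H_m(x) H_n(y) = (i^n / 2^{m+n}) Σ_{j=0}^{m+n}
  (Σ_{r+s=j, 0 ≤ r ≤ m, 0 ≤ s ≤ n} C(m,r) C(n,s) (−1)^s) J_{j, m+n−j}(z)`
(the terms with `r > m` or `s > n` vanish since then the binomial coefficients are zero). -/
theorem hermite_mul_hermite_eq_sum_complexHermite (m n : ℕ) (x y : ℝ) :
    (hermiteEval m x : ℂ) * (hermiteEval n y : ℂ) =
      Complex.I ^ n / 2 ^ (m + n) *
        ∑ j ∈ Finset.range (m + n + 1),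
          (∑ rs ∈ Finset.HasAntidiagonal.antidiagonal j,
            (m.choose rs.1 : ℂ) * (n.choose rs.2 : ℂ) * (-1 : ℂ) ^ rs.2) *
          complexHermite j (m + n - j) ((x : ℂ) + (y : ℂ) * Complex.I) := by
  have hcoeff (j : ℕ) : ∑ rs ∈ antidiagonal j,
      (m.choose rs.1 : ℂ) * (n.choose rs.2 : ℂ) * (-1 : ℂ) ^ rs.2 =
        ((1 + X) ^ m * (1 - X) ^ n : ℂ[X]).coeff j := by
    simp only [coeff_mul, coeff_one_add_X_pow, coeff_one_sub_X_pow]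
    exact sum_congr rfl fun _ _ ↦ by ring
  simp only [hcoeff, ← complexHermiteSum_apply]
  have h := two_pow_mul_hermiteEval_mul_eq_binomialComplexHermiteSum m n x y
  rw [← binomialComplexHermiteSum, div_mul_eq_mul_div, ← h]
  push_cast
  field_simp
  ring
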